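/- arXiv:1712.05619 — 3 statements merged into one kernel-verified Lean document; each statement's English description precedes it below -/
import Mathlib

section
/- Let A be an associative k-algebra with a double bracket {{-,-}}. Then the associated bracket {a,b} = m({{a,b}}) vanishes on commutators in its first argument: for all a, b, c in A, {ab - ba, c} = 0. -/
/-!
For `t = x ⊗ y` the map `m ∘ σ` sends both `(a x) ⊗ y` and `x ⊗ (y a)` to `y a x`, so it
does not see on which side of the outer bimodule structure `a` acts. By the Leibniz rule,
`m (σ {{c, a b}})` is then symmetric in `a` and `b`, and skew-symmetry turns `{a b - b a, c}`
into minus the difference of these two symmetric terms.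
-/

open TensorProduct

section

variable {k : Type*} [CommSemiring k] {A : Type*} [Semiring A] [Algebra k A]

theorem mul'_comm_rTensor_mulLeft_eq_lTensor_mulRight (a : A) (t : A ⊗[k] A) :
    LinearMap.mul' k A (TensorProduct.comm k A A (LinearMap.rTensor A (LinearMap.mulLeft k a) t)) =
      LinearMap.mul' k A
        (TensorProduct.comm k A A (LinearMap.lTensor A (LinearMap.mulRight k a) t)) := by
  induction t using TensorProduct.induction_on with
  | zero => simp
  | tmul x y => simp [mul_assoc]
  | add u v hu hv => simp only [map_add, hu, hv]

theorem mul'_comm_mul_comm_of_leibniz (db : A →ₗ[k] A →ₗ[k] A ⊗[k] A)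
    (hder : ∀ a b c : A, db a (b * c) =
      LinearMap.rTensor A (LinearMap.mulLeft k b) (db a c)
        + LinearMap.lTensor A (LinearMap.mulRight k c) (db a b))
    (a b c : A) :
    LinearMap.mul' k A (TensorProduct.comm k A A (db c (a * b))) =
      LinearMap.mul' k A (TensorProduct.comm k A A (db c (b * a))) := by
  simp only [hder, map_add, mul'_comm_rTensor_mulLeft_eq_lTensor_mulRight]
  exact add_comm _ _

end

theorem double_bracket_assoc_bracket_vanishes_on_commutators_general
    (k : Type*) [Field k]
    (A : Type*) [Ring A] [Algebra k A]
    (db : A →ₗ[k] A →ₗ[k] A ⊗[k] A)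
    (hder : ∀ a b c : A, db a (b * c) =
      LinearMap.rTensor A (LinearMap.mulLeft k b) (db a c)
        + LinearMap.lTensor A (LinearMap.mulRight k c) (db a b))
    (hskew : ∀ a b : A, db a b = - (TensorProduct.comm k A A) (db b a)) :
    ∀ a b c : A, LinearMap.mul' k A (db (a * b - b * a) c) = 0 := by
  intro a b c
  rw [hskew, map_sub, map_sub, map_neg, map_sub,
    mul'_comm_mul_comm_of_leibniz db hder a b c, sub_self, neg_zero]

/-- the associated bracket of a double bracket vanishes on
commutators in its first argument. -/
theorem double_bracket_assoc_bracket_vanishes_on_commutators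
    (k : Type*) [Field k] [CharZero k]
    (A : Type*) [Ring A] [Algebra k A]
    (db : A →ₗ[k] A →ₗ[k] A ⊗[k] A)
    (hder : ∀ a b c : A, db a (b * c) =
      LinearMap.rTensor A (LinearMap.mulLeft k b) (db a c)
        + LinearMap.lTensor A (LinearMap.mulRight k c) (db a b))
    (hskew : ∀ a b : A, db a b = - (TensorProduct.comm k A A) (db b a)) :
    ∀ a b c : A, LinearMap.mul' k A (db (a * b - b * a) c) = 0 :=
  double_bracket_assoc_bracket_vanishes_on_commutators_general k A db hder hskew
end

section
/- Let A be a double Poisson algebra, i.e. a double bracket {{-,-}} whose triple bracket {{a,b,c}} = {{a,{{b,c}}}}_L + τ_(123){{b,{{c,a}}}}_L + τ_(132){{c,{{a,b}}}}_L vanishes identically. Then the associated bracket {a,b} = m({{a,b}}) makes A into a left Loday algebra: {a,{b,c}} = {{a,b},c} + {b,{a,c}} for all a,b,c ∈ A. -/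
/-!
Apply the multiplication `A ⊗ A ⊗ A → A` to the double Jacobi identities `{{a,b,c}} = 0` and
`{{b,a,c}} = 0` and subtract. By the Leibniz rules of the double bracket in its second argument and,
through skew-symmetry, in its first, the difference is exactly
`{a,{b,c}} - {b,{a,c}} - {{a,b},c}`.
-/

open TensorProduct

variable (k : Type*) [Field k] [CharZero k] (A : Type*) [Ring A] [Algebra k A]

/-- `{{a, x ⊗ y}}_L = {{a,x}} ⊗ y`, reassociated into `A ⊗ (A ⊗ A)`. -/
noncomputable def brL (db : A →ₗ[k] A →ₗ[k] A ⊗[k] A) (a : A) :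
    A ⊗[k] A →ₗ[k] A ⊗[k] (A ⊗[k] A) :=
  (TensorProduct.assoc k A A A).toLinearMap ∘ₗ LinearMap.rTensor A (db a)

/-- the cyclic permutation `τ_(123) : x ⊗ y ⊗ z ↦ z ⊗ x ⊗ y`. -/
noncomputable def cyc : A ⊗[k] (A ⊗[k] A) →ₗ[k] A ⊗[k] (A ⊗[k] A) :=
  (TensorProduct.comm k (A ⊗[k] A) A).toLinearMap ∘ₗ
    (TensorProduct.assoc k A A A).symm.toLinearMap

/-- the triple bracket associated to a double bracket. -/
noncomputable def tripleBr (db : A →ₗ[k] A →ₗ[k] A ⊗[k] A) (a b c : A) :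
    A ⊗[k] (A ⊗[k] A) :=
  brL k A db a (db b c) + cyc k A (brL k A db b (db c a))
    + cyc k A (cyc k A (brL k A db c (db a b)))

namespace DoubleBracket

open LinearMap

section Generic

variable {R : Type*} [CommSemiring R] {A : Type*}

section Semiring

variable [Semiring A] [Algebra R A]

theorem mul'_rTensor_mulLeft (x : A) (t : A ⊗[R] A) :
    mul' R A (rTensor A (mulLeft R x) t) = x * mul' R A t := by
  induction t using TensorProduct.induction_on with
  | zero => simp
  | tmul p q => simp [mul_assoc]
  | add u v hu hv => simp [hu, hv, mul_add]

theorem mul'_lTensor_mulRight (y : A) (t : A ⊗[R] A) :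
    mul' R A (lTensor A (mulRight R y) t) = mul' R A t * y := by
  induction t using TensorProduct.induction_on with
  | zero => simp
  | tmul p q => simp [mul_assoc]
  | add u v hu hv => simp [hu, hv, add_mul]

theorem mul'_comm_rTensor_comm (f : A →ₗ[R] A) (t : A ⊗[R] A) :
    mul' R A (TensorProduct.comm R A A (rTensor A f (TensorProduct.comm R A A t))) =
      mul' R A (lTensor A f t) := by
  induction t using TensorProduct.induction_on with
  | zero => simp
  | tmul p q => simp
  | add u v hu hv => simp [hu, hv]

noncomputable def sandwich (v : A) : A ⊗[R] A →ₗ[R] A :=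
  mul' R A ∘ₗ (TensorProduct.comm R A A).toLinearMap ∘ₗ lTensor A (mulRight R v)

@[simp]
theorem sandwich_tmul (v p q : A) : sandwich v (p ⊗ₜ[R] q) = q * v * p := by
  simp [sandwich]

theorem mul'_comm_rTensor_mulLeft (x : A) (t : A ⊗[R] A) :
    mul' R A (TensorProduct.comm R A A (rTensor A (mulLeft R x) t)) = sandwich x t := by
  induction t using TensorProduct.induction_on with
  | zero => simp
  | tmul p q => simp [mul_assoc]
  | add u v hu hv => simp [hu, hv]

noncomputable def tripleMul : A ⊗[R] (A ⊗[R] A) →ₗ[R] A :=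
  mul' R A ∘ₗ lTensor A (mul' R A)

@[simp]
theorem tripleMul_tmul (x y z : A) : tripleMul (x ⊗ₜ[R] (y ⊗ₜ[R] z)) = x * (y * z) := by
  simp [tripleMul]

theorem tripleMul_assoc_tmul (t : A ⊗[R] A) (z : A) :
    tripleMul (TensorProduct.assoc R A A A (t ⊗ₜ z)) = mul' R A t * z := by
  induction t using TensorProduct.induction_on with
  | zero => simp
  | tmul p q => simp [mul_assoc]
  | add u v hu hv => simp [add_tmul, hu, hv, add_mul]

variable {db : A →ₗ[R] A →ₗ[R] A ⊗[R] A}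
  (hder : ∀ a b c : A, db a (b * c) =
    rTensor A (mulLeft R b) (db a c) + lTensor A (mulRight R c) (db a b))
include hder

theorem bracket_mul_right (a x y : A) :
    mul' R A (db a (x * y)) = mul' R A (db a x) * y + x * mul' R A (db a y) := by
  rw [hder, map_add, mul'_rTensor_mulLeft, mul'_lTensor_mulRight, add_comm]

theorem bracket_mul'_right (a : A) (w : A ⊗[R] A) :
    mul' R A (db a (mul' R A w)) =
      mul' R A (rTensor A (mul' R A ∘ₗ db a) w) + mul' R A (lTensor A (mul' R A ∘ₗ db a) w) := by
  induction w using TensorProduct.induction_on with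
  | zero => simp
  | tmul x y => simp [bracket_mul_right hder]
  | add u v hu hv => simp only [map_add, hu, hv]; abel

end Semiring

theorem bracket_mul_left [Ring A] [Algebra R A] {db : A →ₗ[R] A →ₗ[R] A ⊗[R] A}
    (hder : ∀ a b c : A, db a (b * c) =
      rTensor A (mulLeft R b) (db a c) + lTensor A (mulRight R c) (db a b))
    (hskew : ∀ a b : A, db a b = -TensorProduct.comm R A A (db b a)) (x y c : A) :
    mul' R A (db (x * y) c) = -(sandwich x (db c y) + sandwich y (db c x)) := by
  rw [hskew, hder, map_neg, map_add, map_add, mul'_comm_rTensor_mulLeft]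
  rfl

end Generic

section Triple

variable {k : Type*} [Field k] {A : Type*} [Ring A] [Algebra k A]

theorem tripleMul_cyc_assoc_tmul (t : A ⊗[k] A) (z : A) :
    tripleMul (cyc k A (TensorProduct.assoc k A A A (t ⊗ₜ z))) = z * mul' k A t := by
  induction t using TensorProduct.induction_on with
  | zero => simp
  | tmul p q => simp [cyc]
  | add u v hu hv => simp [add_tmul, hu, hv, mul_add]

theorem tripleMul_cyc_cyc_assoc_tmul (t : A ⊗[k] A) (z : A) :
    tripleMul (cyc k A (cyc k A (TensorProduct.assoc k A A A (t ⊗ₜ z)))) = sandwich z t := by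
  induction t using TensorProduct.induction_on with
  | zero => simp
  | tmul p q => simp [cyc, mul_assoc]
  | add u v hu hv => simp [add_tmul, hu, hv]

variable {db : A →ₗ[k] A →ₗ[k] A ⊗[k] A}

theorem tripleMul_brL (a : A) (w : A ⊗[k] A) :
    tripleMul (brL k A db a w) = mul' k A (rTensor A (mul' k A ∘ₗ db a) w) := by
  induction w using TensorProduct.induction_on with
  | zero => simp
  | tmul x y => simp [brL, tripleMul_assoc_tmul]
  | add u v hu hv => simp [hu, hv]

theorem tripleMul_cyc_brL (a : A) (w : A ⊗[k] A) :
    tripleMul (cyc k A (brL k A db a w)) =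
      mul' k A (TensorProduct.comm k A A (rTensor A (mul' k A ∘ₗ db a) w)) := by
  induction w using TensorProduct.induction_on with
  | zero => simp
  | tmul x y => simp [brL, tripleMul_cyc_assoc_tmul]
  | add u v hu hv => simp [hu, hv]

theorem bracket_mul'_left
    (hder : ∀ a b c : A, db a (b * c) =
      rTensor A (mulLeft k b) (db a c) + lTensor A (mulRight k c) (db a b))
    (hskew : ∀ a b : A, db a b = -TensorProduct.comm k A A (db b a)) (c : A) (w : A ⊗[k] A) :
    mul' k A (db (mul' k A w) c) =
      -(tripleMul (cyc k A (cyc k A (brL k A db c w))) +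
        tripleMul (cyc k A (cyc k A (brL k A db c (TensorProduct.comm k A A w))))) := by
  induction w using TensorProduct.induction_on with
  | zero => simp
  | tmul x y =>
    simp only [mul'_apply, bracket_mul_left hder hskew, brL, LinearMap.comp_apply,
      LinearEquiv.coe_coe, rTensor_tmul, TensorProduct.comm_tmul, tripleMul_cyc_cyc_assoc_tmul]
    abel
  | add u v hu hv => simp only [map_add, LinearMap.add_apply, hu, hv]; abel

theorem tripleMul_tripleBr (hskew : ∀ a b : A, db a b = -TensorProduct.comm k A A (db b a))
    (a b c : A) :
    tripleMul (tripleBr k A db a b c) =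
      mul' k A (rTensor A (mul' k A ∘ₗ db a) (db b c)) -
        mul' k A (lTensor A (mul' k A ∘ₗ db b) (db a c)) +
        tripleMul (cyc k A (cyc k A (brL k A db c (db a b)))) := by
  rw [tripleBr, map_add, map_add, tripleMul_brL, tripleMul_cyc_brL, hskew c a, map_neg, map_neg,
    map_neg, mul'_comm_rTensor_comm, sub_eq_add_neg]

end Triple

end DoubleBracket

open DoubleBracket

/-- on a double Poisson algebra, the associated bracket makes `A`
into a left Loday algebra. -/
theorem double_poisson_assoc_bracket_loday
    (db : A →ₗ[k] A →ₗ[k] A ⊗[k] A)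
    (hder : ∀ a b c : A, db a (b * c) =
      LinearMap.rTensor A (LinearMap.mulLeft k b) (db a c)
        + LinearMap.lTensor A (LinearMap.mulRight k c) (db a b))
    (hskew : ∀ a b : A, db a b = - (TensorProduct.comm k A A) (db b a))
    (hpoisson : ∀ a b c : A, tripleBr k A db a b c = 0) :
    ∀ a b c : A,
      LinearMap.mul' k A (db a (LinearMap.mul' k A (db b c))) =
        LinearMap.mul' k A (db (LinearMap.mul' k A (db a b)) c)
          + LinearMap.mul' k A (db b (LinearMap.mul' k A (db a c))) := by
  intro a b c
  have h₁ := tripleMul_tripleBr hskew a b c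
  have h₂ := tripleMul_tripleBr hskew b a c
  rw [hpoisson, map_zero] at h₁ h₂
  rw [hskew b a] at h₂
  simp only [map_neg] at h₂
  rw [bracket_mul'_right hder, bracket_mul'_right hder, bracket_mul'_left hder hskew]
  linear_combination (norm := abel) h₂ - h₁
end

section
/- Let A be a double Poisson algebra with associated bracket {a,b} = m({{a,b}}). Then {-,-} descends to a well-defined Lie bracket on the quotient vector space A/[A,A], i.e. the induced bracket is well-defined, antisymmetric, and satisfies the Jacobi identity. -/
open TensorProduct

variable (k : Type*) [Field k] [CharZero k] (A : Type*) [Ring A] [Algebra k A]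

/-!
Modulo commutators, the multiplication `m : A ⊗ A → A` is invariant under the flip and the
multiplication `A ⊗ A ⊗ A → A` under cyclic permutations. By the Leibniz rule each `{a, -}` is
a derivation of `A`, so it preserves `[A,A]`; with antisymmetry (from skew-symmetry of `{{-,-}}`)
this gives well-definedness. For Jacobi, the Leibniz rule and skew-symmetry give
`{a,{b,c}} ≡ m({{a,{{b,c}}}}_L) - m({{a,{{c,b}}}}_L)`, and cyclic invariance turns the cyclic sum
of these into `m({{a,b,c}}) - m({{a,c,b}})`, which vanishes.
-/

section Commutators

variable {R A : Type*} [CommRing R] [Ring A] [Algebra R A]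

variable (R A) in
def commutatorSpan : Submodule R A :=
  Submodule.span R {x : A | ∃ p q : A, x = p * q - q * p}

theorem commutator_mem_commutatorSpan (p q : A) : p * q - q * p ∈ commutatorSpan R A :=
  Submodule.subset_span ⟨p, q, rfl⟩

theorem mkQ_mul'_comm (t : A ⊗[R] A) :
    (commutatorSpan R A).mkQ (LinearMap.mul' R A (TensorProduct.comm R A A t)) =
      (commutatorSpan R A).mkQ (LinearMap.mul' R A t) := by
  induction t using TensorProduct.induction_on with
  | zero => simp
  | tmul x y => simpa [Submodule.Quotient.eq] using commutator_mem_commutatorSpan y x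
  | add t₁ t₂ h₁ h₂ => simp only [map_add, h₁, h₂]

theorem map_mem_commutatorSpan_of_leibniz (f : A →ₗ[R] A)
    (hf : ∀ p q, f (p * q) = p * f q + f p * q) {x : A} (hx : x ∈ commutatorSpan R A) :
    f x ∈ commutatorSpan R A := by
  induction hx using Submodule.span_induction with
  | mem x hx =>
    obtain ⟨p, q, rfl⟩ := hx
    have h : f (p * q - q * p) = (p * f q - f q * p) + (f p * q - q * f p) := by
      rw [map_sub, hf, hf]; abel
    exact h ▸ add_mem (commutator_mem_commutatorSpan _ _) (commutator_mem_commutatorSpan _ _)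
  | zero => simp
  | add x y _ _ hx hy => simpa using add_mem hx hy
  | smul c x _ hx => simpa using Submodule.smul_mem _ c hx

theorem map_mul'_of_leibniz (f : A →ₗ[R] A) (hf : ∀ p q, f (p * q) = p * f q + f p * q)
    (t : A ⊗[R] A) :
    f (LinearMap.mul' R A t) =
      LinearMap.mul' R A (f.rTensor A t) + LinearMap.mul' R A (f.lTensor A t) := by
  induction t using TensorProduct.induction_on with
  | zero => simp
  | tmul x y => simp [hf, add_comm]
  | add t₁ t₂ h₁ h₂ => simp only [map_add, h₁, h₂]; abel

variable (R A) in
noncomputable def tripleMul : A ⊗[R] (A ⊗[R] A) →ₗ[R] A :=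
  LinearMap.mul' R A ∘ₗ LinearMap.lTensor A (LinearMap.mul' R A)

theorem tripleMul_comp_assoc :
    tripleMul R A ∘ₗ (TensorProduct.assoc R A A A).toLinearMap =
      LinearMap.mul' R A ∘ₗ LinearMap.rTensor A (LinearMap.mul' R A) := by
  ext x y z
  simp [tripleMul, mul_assoc]

end Commutators

section CyclicInvariance

variable {K A : Type*} [Field K] [Ring A] [Algebra K A]

theorem mkQ_tripleMul_cyc (w : A ⊗[K] (A ⊗[K] A)) :
    (commutatorSpan K A).mkQ (tripleMul K A (cyc K A w)) =
      (commutatorSpan K A).mkQ (tripleMul K A w) := by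
  suffices h : (commutatorSpan K A).mkQ ∘ₗ tripleMul K A ∘ₗ cyc K A =
      (commutatorSpan K A).mkQ ∘ₗ tripleMul K A from LinearMap.congr_fun h w
  ext x y z
  simpa [tripleMul, cyc, Submodule.Quotient.eq, mul_assoc] using
    commutator_mem_commutatorSpan z (x * y)

theorem tripleMul_brL (db : A →ₗ[K] A →ₗ[K] A ⊗[K] A) (a : A) (t : A ⊗[K] A) :
    tripleMul K A (brL K A db a t) =
      LinearMap.mul' K A (LinearMap.rTensor A (LinearMap.mul' K A ∘ₗ db a) t) := by
  rw [brL, LinearMap.rTensor_comp_apply, ← LinearMap.comp_apply (tripleMul K A),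
    ← LinearMap.comp_apply _ (LinearMap.rTensor A (db a)), ← LinearMap.comp_assoc,
    tripleMul_comp_assoc]
  rfl

end CyclicInvariance

section AssociatedBracket

variable {R A : Type*} [CommRing R] [Ring A] [Algebra R A] (db : A →ₗ[R] A →ₗ[R] A ⊗[R] A)

/-- `{{a, bc}} = b {{a, c}} + {{a, b}} c` for the outer bimodule structure on `A ⊗ A`. -/
def IsDoubleDerivation : Prop :=
  ∀ a b c : A, db a (b * c) =
    LinearMap.rTensor A (LinearMap.mulLeft R b) (db a c)
      + LinearMap.lTensor A (LinearMap.mulRight R c) (db a b)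

variable {db}

theorem IsDoubleDerivation.mul'_apply_mul (hder : IsDoubleDerivation db) (a p q : A) :
    LinearMap.mul' R A (db a (p * q)) =
      p * LinearMap.mul' R A (db a q) + LinearMap.mul' R A (db a p) * q := by
  have mul'_rTensor (t : A ⊗[R] A) :
      LinearMap.mul' R A (LinearMap.rTensor A (LinearMap.mulLeft R p) t) =
        p * LinearMap.mul' R A t := by
    induction t using TensorProduct.induction_on with
    | zero => simp
    | tmul x y => simp [mul_assoc]
    | add t₁ t₂ h₁ h₂ => simp only [map_add, h₁, h₂, mul_add]
  have mul'_lTensor (t : A ⊗[R] A) :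
      LinearMap.mul' R A (LinearMap.lTensor A (LinearMap.mulRight R q) t) =
        LinearMap.mul' R A t * q := by
    induction t using TensorProduct.induction_on with
    | zero => simp
    | tmul x y => simp [mul_assoc]
    | add t₁ t₂ h₁ h₂ => simp only [map_add, h₁, h₂, add_mul]
  rw [hder, map_add, mul'_rTensor, mul'_lTensor]

theorem IsDoubleDerivation.mul'_apply_mem_commutatorSpan_right (hder : IsDoubleDerivation db)
    (a : A) {x : A} (hx : x ∈ commutatorSpan R A) :
    LinearMap.mul' R A (db a x) ∈ commutatorSpan R A :=
  map_mem_commutatorSpan_of_leibniz (LinearMap.mul' R A ∘ₗ db a) (hder.mul'_apply_mul a) hx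

theorem mul'_apply_add_mul'_apply_swap_mem
    (hskew : ∀ a b : A, db a b = - (TensorProduct.comm R A A) (db b a)) (a b : A) :
    LinearMap.mul' R A (db a b) + LinearMap.mul' R A (db b a) ∈ commutatorSpan R A := by
  rw [← Submodule.Quotient.mk_eq_zero, Submodule.Quotient.mk_add, hskew a b, map_neg,
    Submodule.Quotient.mk_neg]
  exact neg_add_eq_zero.2 (mkQ_mul'_comm (db b a))

theorem IsDoubleDerivation.mul'_apply_mem_commutatorSpan_left (hder : IsDoubleDerivation db)
    (hskew : ∀ a b : A, db a b = - (TensorProduct.comm R A A) (db b a)) (b : A)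
    {x : A} (hx : x ∈ commutatorSpan R A) :
    LinearMap.mul' R A (db x b) ∈ commutatorSpan R A := by
  simpa using sub_mem (mul'_apply_add_mul'_apply_swap_mem hskew x b)
    (hder.mul'_apply_mem_commutatorSpan_right b hx)

end AssociatedBracket

section Jacobi

variable {K A : Type*} [Field K] [Ring A] [Algebra K A] {db : A →ₗ[K] A →ₗ[K] A ⊗[K] A}

theorem IsDoubleDerivation.mkQ_mul'_apply_mul'_apply (hder : IsDoubleDerivation db)
    (hskew : ∀ a b : A, db a b = - (TensorProduct.comm K A A) (db b a)) (a b c : A) :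
    (commutatorSpan K A).mkQ (LinearMap.mul' K A (db a (LinearMap.mul' K A (db b c)))) =
      (commutatorSpan K A).mkQ (tripleMul K A (brL K A db a (db b c))) -
        (commutatorSpan K A).mkQ (tripleMul K A (brL K A db a (db c b))) := by
  set f := LinearMap.mul' K A ∘ₗ db a
  have hswap : (commutatorSpan K A).mkQ (LinearMap.mul' K A (LinearMap.lTensor A f (db b c))) =
      -(commutatorSpan K A).mkQ (LinearMap.mul' K A (LinearMap.rTensor A f (db c b))) := by
    rw [hskew b c, map_neg, LinearMap.lTensor_comm, map_neg, map_neg, mkQ_mul'_comm]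
  rw [tripleMul_brL, tripleMul_brL, ← LinearMap.comp_apply (LinearMap.mul' K A) (db a),
    map_mul'_of_leibniz f (hder.mul'_apply_mul a), map_add, hswap, sub_eq_add_neg]

theorem mkQ_tripleMul_tripleBr (a b c : A) :
    (commutatorSpan K A).mkQ (tripleMul K A (tripleBr K A db a b c)) =
      (commutatorSpan K A).mkQ (tripleMul K A (brL K A db a (db b c))) +
        (commutatorSpan K A).mkQ (tripleMul K A (brL K A db b (db c a))) +
        (commutatorSpan K A).mkQ (tripleMul K A (brL K A db c (db a b))) := by
  simp only [tripleBr, map_add, mkQ_tripleMul_cyc]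

theorem IsDoubleDerivation.jacobi_mem (hder : IsDoubleDerivation db)
    (hskew : ∀ a b : A, db a b = - (TensorProduct.comm K A A) (db b a))
    (hpoisson : ∀ a b c : A, tripleBr K A db a b c = 0) (a b c : A) :
    LinearMap.mul' K A (db a (LinearMap.mul' K A (db b c)))
      + LinearMap.mul' K A (db b (LinearMap.mul' K A (db c a)))
      + LinearMap.mul' K A (db c (LinearMap.mul' K A (db a b))) ∈ commutatorSpan K A := by
  have hsum : (commutatorSpan K A).mkQ (LinearMap.mul' K A (db a (LinearMap.mul' K A (db b c)))
      + LinearMap.mul' K A (db b (LinearMap.mul' K A (db c a)))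
      + LinearMap.mul' K A (db c (LinearMap.mul' K A (db a b)))) =
      (commutatorSpan K A).mkQ (tripleMul K A (tripleBr K A db a b c)) -
        (commutatorSpan K A).mkQ (tripleMul K A (tripleBr K A db a c b)) := by
    rw [map_add, map_add, hder.mkQ_mul'_apply_mul'_apply hskew,
      hder.mkQ_mul'_apply_mul'_apply hskew, hder.mkQ_mul'_apply_mul'_apply hskew,
      mkQ_tripleMul_tripleBr, mkQ_tripleMul_tripleBr]
    abel
  rw [hpoisson, hpoisson, sub_self] at hsum
  exact (Submodule.Quotient.mk_eq_zero _).1 hsum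

end Jacobi

/-- on a double Poisson algebra, the associated bracket
`{a,b} = m({{a,b}})` descends to a well-defined Lie bracket on `A/[A,A]`. -/
theorem double_poisson_assoc_bracket_lie_on_quotient
    (db : A →ₗ[k] A →ₗ[k] A ⊗[k] A)
    (hder : ∀ a b c : A, db a (b * c) =
      LinearMap.rTensor A (LinearMap.mulLeft k b) (db a c)
        + LinearMap.lTensor A (LinearMap.mulRight k c) (db a b))
    (hskew : ∀ a b : A, db a b = - (TensorProduct.comm k A A) (db b a))
    (hpoisson : ∀ a b c : A, tripleBr k A db a b c = 0) :
    (∀ a a' b : A,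
      a - a' ∈ Submodule.span k {x : A | ∃ p q : A, x = p * q - q * p} →
      LinearMap.mul' k A (db a b) - LinearMap.mul' k A (db a' b) ∈
        Submodule.span k {x : A | ∃ p q : A, x = p * q - q * p} ∧
      LinearMap.mul' k A (db b a) - LinearMap.mul' k A (db b a') ∈
        Submodule.span k {x : A | ∃ p q : A, x = p * q - q * p}) ∧
    (∀ a b : A,
      LinearMap.mul' k A (db a b) + LinearMap.mul' k A (db b a) ∈
        Submodule.span k {x : A | ∃ p q : A, x = p * q - q * p}) ∧
    (∀ a b c : A,
      LinearMap.mul' k A (db a (LinearMap.mul' k A (db b c)))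
        + LinearMap.mul' k A (db b (LinearMap.mul' k A (db c a)))
        + LinearMap.mul' k A (db c (LinearMap.mul' k A (db a b))) ∈
        Submodule.span k {x : A | ∃ p q : A, x = p * q - q * p}) := by
  have hder : IsDoubleDerivation db := hder
  refine ⟨fun a a' b h => ⟨?_, ?_⟩, mul'_apply_add_mul'_apply_swap_mem hskew,
    hder.jacobi_mem hskew hpoisson⟩
  · rw [← map_sub, ← LinearMap.sub_apply, ← map_sub]
    exact hder.mul'_apply_mem_commutatorSpan_left hskew b h
  · rw [← map_sub, ← map_sub]
    exact hder.mul'_apply_mem_commutatorSpan_right b h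
end
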